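/- Let 𝒳 ⊆ ℝⁿ be compact, Φ : 𝒳 → ∏_{i=1}^p ℝ^{n_i} continuous and 2q-Lipschitz redundant with constant M, and suppose ẑ = Φ(x) + r + e with ‖r‖ ≤ δ (sup norm) and e having at most q nonzero blocks. Let I ⊆ {1,...,p} with |I| = p−q. If dist(ẑ_I, Φ_I(𝒳)) ≤ δ, then ‖ẑ_I − Φ_I(x)‖ ≤ (2M+1)·δ. -/

import Mathlib

open scoped Classical

/-- Projection of a block vector onto the blocks indexed by `I`. -/
noncomputable def blockProj {p : ℕ} {n : Fin p → ℕ} (I : Finset (Fin p))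
    (v : ∀ i : Fin p, Fin (n i) → ℝ) : ∀ i : ↥I, Fin (n i) → ℝ :=
  fun i => v i

/-- Number of nonzero blocks of a block vector. -/
noncomputable def blockSupp {p : ℕ} {n : Fin p → ℕ}
    (v : ∀ i : Fin p, Fin (n i) → ℝ) : ℕ :=
  (Finset.univ.filter fun i => v i ≠ 0).card

/-- `Φ` is `k`-redundant: for every index set with at least `p - k` elements,
the projection onto those blocks is injective on the image of `Φ`. -/
def Redundant {X : Type*} {p : ℕ} {n : Fin p → ℕ}
    (Φ : X → ∀ i : Fin p, Fin (n i) → ℝ) (k : ℕ) : Prop :=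
  ∀ I : Finset (Fin p), p - k ≤ I.card →
    Set.InjOn (blockProj I) (Set.range Φ)

/-!
Pick `x'` with `Φ_I(x')` nearest to `ẑ_I`. At most `q` blocks of `I` are hit by `e`, so on the
remaining set `J ⊆ I` of at least `p - 2q` blocks both `Φ_J(x)` and `Φ_J(x')` lie within `δ` of
`ẑ_J`. Lipschitz redundancy on `J` gives `‖Φ(x) - Φ(x')‖ ≤ 2Mδ`, and the triangle inequality
through `Φ_I(x')` gives the bound `δ + 2Mδ`.
-/

theorem IsCompact.exists_dist_le_of_infDist_le {X α : Type*} [TopologicalSpace X]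
    [PseudoMetricSpace α] {K : Set X} (hK : IsCompact K) (hne : K.Nonempty) {f : X → α}
    (hf : ContinuousOn f K) {y : α} {δ : ℝ} (h : Metric.infDist y (f '' K) ≤ δ) :
    ∃ x ∈ K, dist y (f x) ≤ δ := by
  obtain ⟨_, ⟨x, hx, rfl⟩, hdist⟩ :=
    (hK.image_of_continuousOn hf).exists_infDist_eq_dist (hne.image f) y
  exact ⟨x, hx, hdist ▸ h⟩

theorem norm_sub_le_two_mul_of_norm_sub_le {E : Type*} [SeminormedAddCommGroup E] {z a b : E}
    {δ : ℝ} (ha : ‖z - a‖ ≤ δ) (hb : ‖z - b‖ ≤ δ) : ‖a - b‖ ≤ 2 * δ := by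
  simp only [← dist_eq_norm] at *
  linarith [dist_triangle_left a b z]

section BlockVectors

variable {p : ℕ} {n : Fin p → ℕ}

noncomputable def blockSupport (v : ∀ i : Fin p, Fin (n i) → ℝ) : Finset (Fin p) :=
  Finset.univ.filter fun i => v i ≠ 0

theorem card_blockSupport (v : ∀ i : Fin p, Fin (n i) → ℝ) :
    (blockSupport v).card = blockSupp v := rfl

theorem blockProj_sub (I : Finset (Fin p)) (a b : ∀ i : Fin p, Fin (n i) → ℝ) :
    blockProj I (a - b) = blockProj I a - blockProj I b := rfl

theorem blockProj_add (I : Finset (Fin p)) (a b : ∀ i : Fin p, Fin (n i) → ℝ) :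
    blockProj I (a + b) = blockProj I a + blockProj I b := rfl

theorem continuous_blockProj (I : Finset (Fin p)) :
    Continuous (blockProj (n := n) I) :=
  Pi.continuous_precomp' (fun i : ↥I => (i : Fin p))

theorem norm_blockProj_le (I : Finset (Fin p)) (v : ∀ i : Fin p, Fin (n i) → ℝ) :
    ‖blockProj I v‖ ≤ ‖v‖ :=
  (pi_norm_le_iff_of_nonneg (norm_nonneg v)).2 fun i => norm_le_pi_norm v i.1

theorem norm_blockProj_le_of_subset {J I : Finset (Fin p)} (h : J ⊆ I)
    (v : ∀ i : Fin p, Fin (n i) → ℝ) : ‖blockProj J v‖ ≤ ‖blockProj I v‖ :=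
  (pi_norm_le_iff_of_nonneg (norm_nonneg _)).2 fun i =>
    norm_le_pi_norm (blockProj I v) ⟨i.1, h i.2⟩

theorem blockProj_sdiff_blockSupport (I : Finset (Fin p)) (e : ∀ i : Fin p, Fin (n i) → ℝ) :
    blockProj (I \ blockSupport e) e = 0 := by
  funext i
  by_contra hi
  exact (Finset.mem_sdiff.1 i.2).2 (Finset.mem_filter.2 ⟨Finset.mem_univ _, hi⟩)

theorem card_sdiff_blockSupport_ge {q : ℕ} {I : Finset (Fin p)} (hI : I.card = p - q)
    {e : ∀ i : Fin p, Fin (n i) → ℝ} (he : blockSupp e ≤ q) :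
    p - 2 * q ≤ (I \ blockSupport e).card := by
  have := Finset.le_card_sdiff (blockSupport e) I
  rw [card_blockSupport] at this
  omega

end BlockVectors

theorem stmt7_general {N p q : ℕ} {n : Fin p → ℕ}
    (𝒳 : Set (EuclideanSpace ℝ (Fin N))) (hK : IsCompact 𝒳)
    (Φ : EuclideanSpace ℝ (Fin N) → ∀ i : Fin p, Fin (n i) → ℝ)
    (hΦ : ContinuousOn Φ 𝒳)
    (M δ : ℝ) (hM : 0 ≤ M)
    (hLred : ∀ J : Finset (Fin p), p - 2 * q ≤ J.card →
      ∀ x₁ ∈ 𝒳, ∀ x₂ ∈ 𝒳,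
        ‖Φ x₁ - Φ x₂‖ ≤ M * ‖blockProj J (Φ x₁) - blockProj J (Φ x₂)‖)
    (x : EuclideanSpace ℝ (Fin N)) (hx : x ∈ 𝒳)
    (zhat r e : ∀ i : Fin p, Fin (n i) → ℝ)
    (hz : zhat = Φ x + r + e) (hr : ‖r‖ ≤ δ) (he : blockSupp e ≤ q)
    (I : Finset (Fin p)) (hI : I.card = p - q)
    (hdist : Metric.infDist (blockProj I zhat)
        ((fun x' => blockProj I (Φ x')) '' 𝒳) ≤ δ) :
    ‖blockProj I zhat - blockProj I (Φ x)‖ ≤ (2 * M + 1) * δ := by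
  obtain ⟨x', hx', hnear⟩ := hK.exists_dist_le_of_infDist_le ⟨x, hx⟩
    ((continuous_blockProj I).comp_continuousOn hΦ) hdist
  replace hnear : ‖blockProj I zhat - blockProj I (Φ x')‖ ≤ δ := by
    rwa [← dist_eq_norm]
  set J := I \ blockSupport e
  have hJ_clean : blockProj J zhat - blockProj J (Φ x) = blockProj J r := by
    rw [hz, blockProj_add, blockProj_add, blockProj_sdiff_blockSupport]
    abel
  have hJ_near : ‖blockProj J zhat - blockProj J (Φ x')‖ ≤ δ := by
    rw [← blockProj_sub] at hnear ⊢
    exact (norm_blockProj_le_of_subset Finset.sdiff_subset _).trans hnear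
  have hJ_close : ‖blockProj J (Φ x) - blockProj J (Φ x')‖ ≤ 2 * δ :=
    norm_sub_le_two_mul_of_norm_sub_le (hJ_clean ▸ (norm_blockProj_le J r).trans hr) hJ_near
  have hclose : ‖blockProj I (Φ x') - blockProj I (Φ x)‖ ≤ M * (2 * δ) := by
    rw [norm_sub_rev, ← blockProj_sub]
    calc _ ≤ ‖Φ x - Φ x'‖ := norm_blockProj_le I _
      _ ≤ M * ‖blockProj J (Φ x) - blockProj J (Φ x')‖ :=
          hLred J (card_sdiff_blockSupport_ge hI he) x hx x' hx'
      _ ≤ M * (2 * δ) := mul_le_mul_of_nonneg_left hJ_close hM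
  calc _ ≤ ‖blockProj I zhat - blockProj I (Φ x')‖ + ‖blockProj I (Φ x') - blockProj I (Φ x)‖ :=
        norm_sub_le_norm_sub_add_norm_sub _ _ _
    _ ≤ δ + M * (2 * δ) := add_le_add hnear hclose
    _ = (2 * M + 1) * δ := by ring

theorem stmt7 {N p q : ℕ} {n : Fin p → ℕ}
    (𝒳 : Set (EuclideanSpace ℝ (Fin N))) (hK : IsCompact 𝒳)
    (Φ : EuclideanSpace ℝ (Fin N) → ∀ i : Fin p, Fin (n i) → ℝ)
    (hΦ : ContinuousOn Φ 𝒳)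
    (M δ : ℝ) (hM : 0 ≤ M) (hδ : 0 ≤ δ)
    (hLred : ∀ J : Finset (Fin p), p - 2 * q ≤ J.card →
      ∀ x₁ ∈ 𝒳, ∀ x₂ ∈ 𝒳,
        ‖Φ x₁ - Φ x₂‖ ≤ M * ‖blockProj J (Φ x₁) - blockProj J (Φ x₂)‖)
    (x : EuclideanSpace ℝ (Fin N)) (hx : x ∈ 𝒳)
    (zhat r e : ∀ i : Fin p, Fin (n i) → ℝ)
    (hz : zhat = Φ x + r + e) (hr : ‖r‖ ≤ δ) (he : blockSupp e ≤ q)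
    (I : Finset (Fin p)) (hI : I.card = p - q)
    (hdist : Metric.infDist (blockProj I zhat)
        ((fun x' => blockProj I (Φ x')) '' 𝒳) ≤ δ) :
    ‖blockProj I zhat - blockProj I (Φ x)‖ ≤ (2 * M + 1) * δ :=
  stmt7_general 𝒳 hK Φ hΦ M δ hM hLred x hx zhat r e hz hr he I hI hdist
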